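/- For every integer t ≥ 1 there exists a binary LCD [15t+13, 4, 8t+6] code, i.e., a 4-dimensional linear complementary dual subspace of F_2^(15t+13) with minimum weight 8t+6. -/

import Mathlib

/-- The (Hamming) weight of a vector over `F_2`. -/
def wt {n : ℕ} (x : Fin n → ZMod 2) : ℕ :=
  Finset.card (Finset.univ.filter fun i => x i ≠ 0)

/-- The dual code of a binary code `C`, with respect to the standard inner product. -/
def dualCode {n : ℕ} (C : Submodule (ZMod 2) (Fin n → ZMod 2)) :
    Submodule (ZMod 2) (Fin n → ZMod 2) where
  carrier := {x | ∀ y ∈ C, ∑ i, x i * y i = 0}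
  add_mem' := by
    intro a b ha hb y hy
    simp [Pi.add_apply, add_mul, Finset.sum_add_distrib, ha y hy, hb y hy]
  zero_mem' := by
    intro y hy
    simp
  smul_mem' := by
    intro c a ha y hy
    simp only [Pi.smul_apply, smul_eq_mul, mul_assoc, ← Finset.mul_sum, ha y hy, mul_zero]

/-- A binary code is linear complementary dual (LCD) if it meets its dual trivially. -/
def IsLCD {n : ℕ} (C : Submodule (ZMod 2) (Fin n → ZMod 2)) : Prop :=
  C ⊓ dualCode C = ⊥

/-- The minimum weight of a binary code: the smallest weight of a nonzero codeword. -/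
noncomputable def minWt {n : ℕ} (C : Submodule (ZMod 2) (Fin n → ZMod 2)) : ℕ :=
  sInf {w | ∃ x ∈ C, x ≠ 0 ∧ wt x = w}

/-- `dLCD n k` is the largest minimum weight among all binary LCD `[n,k]` codes. -/
noncomputable def dLCD (n k : ℕ) : ℕ :=
  sSup {d | ∃ C : Submodule (ZMod 2) (Fin n → ZMod 2),
    Module.finrank (ZMod 2) C = k ∧ IsLCD C ∧ minWt C = d}

/-!
The code is generated by `[S | S | ⋯ | S | T]` with `t` copies of a generator matrix `S` of the
`[15, 4, 8]` simplex code and a generator matrix `T` of an LCD `[13, 4, 6]` code. The simplex code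
is self-orthogonal and all its nonzero codewords have weight `8`, so the Gram matrix of the
juxtaposition is `T Tᵀ`, which is nonsingular (the LCD criterion), and every nonzero codeword has
weight `8 t` plus the weight of a nonzero codeword of `T`.
-/

open Matrix Finset

theorem wt_zero (n : ℕ) : wt (0 : Fin n → ZMod 2) = 0 := by
  simp [wt]

theorem minWt_eq_of_forall_le {n d : ℕ} (C : Submodule (ZMod 2) (Fin n → ZMod 2))
    (hle : ∀ x ∈ C, x ≠ 0 → d ≤ wt x) {x : Fin n → ZMod 2} (hx : x ∈ C) (hx0 : x ≠ 0)
    (hxd : wt x = d) : minWt C = d :=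
  le_antisymm (Nat.sInf_le ⟨x, hx, hx0, hxd⟩)
    (le_csInf ⟨d, x, hx, hx0, hxd⟩ (by rintro _ ⟨y, hy, hy0, rfl⟩; exact hle y hy hy0))

section Gram

variable {ι κ : Type*} [Fintype ι] [DecidableEq ι] [Fintype κ]

theorem Matrix.vecMul_injective_of_isUnit_mul_transpose {R : Type*} [CommRing R]
    (G : Matrix ι κ R) (hG : IsUnit (G * Gᵀ)) : Function.Injective G.vecMul :=
  fun x y hxy => vecMul_injective_of_isUnit hG (by simp only [← vecMul_vecMul, hxy])

theorem finrank_range_vecMulLinear {K : Type*} [Field K] (G : Matrix ι κ K)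
    (hG : IsUnit (G * Gᵀ)) :
    Module.finrank K (LinearMap.range G.vecMulLinear) = Fintype.card ι := by
  rw [LinearMap.finrank_range_of_inj (G.vecMul_injective_of_isUnit_mul_transpose hG),
    Module.finrank_fintype_fun_eq_card]

theorem isLCD_range_vecMulLinear {n : ℕ} (G : Matrix ι (Fin n) (ZMod 2)) (hG : IsUnit (G * Gᵀ)) :
    IsLCD (LinearMap.range G.vecMulLinear) := by
  rw [IsLCD, eq_bot_iff]
  rintro _ ⟨⟨m, rfl⟩, hdual⟩
  have hm : m ᵥ* (G * Gᵀ) = 0 ᵥ* (G * Gᵀ) := by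
    ext j
    have := hdual (G j) ⟨Pi.single j 1, single_one_vecMul j G⟩
    simpa [← vecMul_vecMul, vecMul_transpose, mulVec, dotProduct, mul_comm] using this
  obtain rfl : m = 0 := vecMul_injective_of_isUnit hG hm
  simp

end Gram

section Juxtaposition

variable {R ι : Type*} {t a b : ℕ}

def blockColEquiv (t a b : ℕ) : Fin (a * t + b) ≃ (Fin t × Fin a) ⊕ Fin b :=
  finSumFinEquiv.symm.trans
    (Equiv.sumCongr ((finCongr (mul_comm a t)).trans finProdFinEquiv.symm) (Equiv.refl _))

/-- The matrix `[A | A | ⋯ | A | B]` with `t` copies of `A`. -/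
def repeatAppend (t : ℕ) (A : Matrix ι (Fin a) R) (B : Matrix ι (Fin b) R) :
    Matrix ι (Fin (a * t + b)) R :=
  (fromCols (of fun i (q : Fin t × Fin a) => A i q.2) B).submatrix id (blockColEquiv t a b)

theorem repeatAppend_mul_transpose [CommSemiring R] (A : Matrix ι (Fin a) R)
    (B : Matrix ι (Fin b) R) :
    repeatAppend t A B * (repeatAppend t A B)ᵀ = t • (A * Aᵀ) + B * Bᵀ := by
  rw [repeatAppend, transpose_submatrix, submatrix_mul_equiv, submatrix_id_id, transpose_fromCols,
    fromCols_mul_fromRows]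
  congr 1
  ext i j
  simp [mul_apply, Fintype.sum_prod_type]

theorem wt_comp_blockColEquiv (v : Fin a → ZMod 2) (w : Fin b → ZMod 2) :
    wt (Sum.elim (fun q : Fin t × Fin a => v q.2) w ∘ blockColEquiv t a b) = t * wt v + wt w := by
  have hsum : ∀ g : ZMod 2 → ℕ,
      ∑ i, g (Sum.elim (fun q : Fin t × Fin a => v q.2) w (blockColEquiv t a b i)) =
        t * ∑ c, g (v c) + ∑ j, g (w j) := by
    intro g
    rw [Equiv.sum_comp (blockColEquiv t a b) (fun p => g (Sum.elim _ w p)),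
      Fintype.sum_sum_type, Fintype.sum_prod_type]
    simp
  simp only [wt, card_filter]
  exact hsum fun z => if z ≠ 0 then 1 else 0

theorem wt_vecMul_repeatAppend [Fintype ι] (m : ι → ZMod 2) (A : Matrix ι (Fin a) (ZMod 2))
    (B : Matrix ι (Fin b) (ZMod 2)) :
    wt (m ᵥ* repeatAppend t A B) = t * wt (m ᵥ* A) + wt (m ᵥ* B) := by
  have hcols : m ᵥ* repeatAppend t A B =
      (m ᵥ* fromCols (of fun i (q : Fin t × Fin a) => A i q.2) B) ∘ blockColEquiv t a b := rfl
  rw [hcols, vecMul_fromCols]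
  exact wt_comp_blockColEquiv (m ᵥ* A) (m ᵥ* B)

end Juxtaposition

/-- The columns are the fifteen nonzero vectors of `F_2^4`. -/
def simplexGen : Matrix (Fin 4) (Fin 15) (ZMod 2) :=
  of fun j c => if (c.val + 1).testBit j then 1 else 0

def lcd13Gen : Matrix (Fin 4) (Fin 13) (ZMod 2) :=
  !![0, 1, 1, 1, 0, 0, 1, 1, 0, 0, 1, 1, 1;
     1, 1, 1, 0, 0, 1, 0, 0, 0, 1, 1, 1, 1;
     1, 0, 1, 0, 1, 0, 0, 1, 0, 1, 0, 1, 0;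
     1, 1, 0, 1, 0, 1, 0, 0, 1, 0, 0, 0, 1]

theorem simplexGen_mul_transpose : simplexGen * simplexGenᵀ = 0 := by decide

theorem wt_vecMul_simplexGen : ∀ m : Fin 4 → ZMod 2, m ≠ 0 → wt (m ᵥ* simplexGen) = 8 := by
  decide

theorem six_le_wt_vecMul_lcd13Gen : ∀ m : Fin 4 → ZMod 2, m ≠ 0 → 6 ≤ wt (m ᵥ* lcd13Gen) := by
  decide

theorem wt_vecMul_lcd13Gen : wt (![1, 1, 0, 0] ᵥ* lcd13Gen) = 6 := by decide

theorem det_lcd13Gen_mul_transpose : (lcd13Gen * lcd13Genᵀ).det = 1 := by decide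

theorem exists_lcd_15t13_general (t : ℕ) :
    ∃ C : Submodule (ZMod 2) (Fin (15 * t + 13) → ZMod 2),
      Module.finrank (ZMod 2) C = 4 ∧ IsLCD C ∧ minWt C = 8 * t + 6 := by
  set G := repeatAppend t simplexGen lcd13Gen
  have hGram : IsUnit (G * Gᵀ) := by
    rw [repeatAppend_mul_transpose, simplexGen_mul_transpose, smul_zero, zero_add,
      isUnit_iff_isUnit_det, det_lcd13Gen_mul_transpose]
    exact isUnit_one
  have hwt (m : Fin 4 → ZMod 2) (hm : m ≠ 0) : wt (m ᵥ* G) = 8 * t + wt (m ᵥ* lcd13Gen) := by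
    rw [wt_vecMul_repeatAppend, wt_vecMul_simplexGen m hm, mul_comm]
  have hwt₀ : wt (![1, 1, 0, 0] ᵥ* G) = 8 * t + 6 := by
    rw [hwt _ (by decide), wt_vecMul_lcd13Gen]
  refine ⟨LinearMap.range G.vecMulLinear, finrank_range_vecMulLinear G hGram,
    isLCD_range_vecMulLinear G hGram,
    minWt_eq_of_forall_le _ ?_ ⟨_, rfl⟩ (ne_of_apply_ne wt ?_) hwt₀⟩
  · rintro _ ⟨m, rfl⟩ hx
    have hm : m ≠ 0 := by rintro rfl; simp at hx
    rw [vecMulLinear_apply, hwt m hm]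
    have h6 := six_le_wt_vecMul_lcd13Gen m hm
    omega
  · rw [vecMulLinear_apply, hwt₀, wt_zero]
    omega

theorem exists_lcd_15t13 (t : ℕ) (ht : 1 ≤ t) :
    ∃ C : Submodule (ZMod 2) (Fin (15 * t + 13) → ZMod 2),
      Module.finrank (ZMod 2) C = 4 ∧ IsLCD C ∧ minWt C = 8 * t + 6 :=
  exists_lcd_15t13_general t
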